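/- arXiv:1406.7629 — 2 statements merged into one kernel-verified Lean document; each statement's English description precedes it below -/
import Mathlib

section
/- Consider the closed-loop SDJLS under the standing assumptions and LMI hypothesis. Define the stochastic Lyapunov function V(x,i) = xᵀ P_i x. Then there exist q ∈ (0,1) and constants c₁ > 0, c₂ > 0 such that for every k ∈ ℕ, almost surely, E[x_{k+1}ᵀ P_{θ_{k+1}} x_{k+1} | 𝓕_k] ≤ q · x_kᵀ P_{θ_k} x_k + c₁‖ν_k‖² + c₂ (the one-step conditional drift inequality for the Lyapunov function). -/
/-!
Conditioning first on `ℱ_k ⊔ σ(w_k)` replaces the random weight `P_{θ_{k+1}}` by the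
transition-averaged matrix `∑ⱼ πⱼ Pⱼ`, where `π` is the row of `λ` or `μ` selected by `θ_k` and by
whether `x_k ∈ C₁`. Against this matrix the LMI says that `V` contracts strictly along the noiseless
closed loop `Ã x_k`; compactness of the unit sphere turns this into a contraction factor `ρ < 1`,
uniform over the finitely many regimes. Young's inequality splits off the `ℱ_k`-measurable part
`Ã x_k + B ν_k` from the noise at the price of a factor `1 + t`, which the margin `1 - ρ` absorbs,
while the noise contributes only a constant because it is independent of `ℱ_k` and has a finite
second moment.
-/

open scoped Classical

open MeasureTheory ProbabilityTheory Matrix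

open Filter Topology

namespace Matrix

variable {ι : Type*} [Fintype ι]

lemma smul_dotProduct_mulVec_smul (c : ℝ) (M : Matrix ι ι ℝ) (z : ι → ℝ) :
    (c • z) ⬝ᵥ M *ᵥ (c • z) = c ^ 2 * (z ⬝ᵥ M *ᵥ z) := by
  simp only [mulVec_smul, smul_dotProduct, dotProduct_smul, smul_eq_mul]
  ring

lemma dotProduct_transpose_mul_mul_mulVec {κ : Type*} [Fintype κ] (A : Matrix κ ι ℝ)
    (Q : Matrix κ κ ℝ) (z : ι → ℝ) : z ⬝ᵥ (Aᵀ * Q * A) *ᵥ z = (A *ᵥ z) ⬝ᵥ Q *ᵥ (A *ᵥ z) := by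
  rw [Matrix.mul_assoc, ← mulVec_mulVec, dotProduct_mulVec, vecMul_transpose, ← mulVec_mulVec]

lemma dotProduct_sum_smul_mulVec {κ : Type*} [Fintype κ] (c : κ → ℝ) (P : κ → Matrix ι ι ℝ)
    (z : ι → ℝ) : z ⬝ᵥ (∑ j, c j • P j) *ᵥ z = ∑ j, c j * (z ⬝ᵥ P j *ᵥ z) := by
  simp only [sum_mulVec, dotProduct_sum, smul_mulVec, dotProduct_smul, smul_eq_mul]

lemma continuous_dotProduct_mulVec (M : Matrix ι ι ℝ) : Continuous fun z : ι → ℝ => z ⬝ᵥ M *ᵥ z :=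
  continuous_id.dotProduct (continuous_const.matrix_mulVec continuous_id)

/-- Both forms are homogeneous of degree two, so it suffices to bound their ratio on the unit
sphere, which is compact. -/
lemma PosDef.exists_dotProduct_mulVec_le_mul {D : Matrix ι ι ℝ} (hD : D.PosDef)
    (M : Matrix ι ι ℝ) : ∃ C, 0 < C ∧ ∀ z, z ⬝ᵥ M *ᵥ z ≤ C * (z ⬝ᵥ D *ᵥ z) := by
  have hpos : ∀ z : ι → ℝ, z ≠ 0 → 0 < z ⬝ᵥ D *ᵥ z := fun z hz => by
    simpa using hD.dotProduct_mulVec_pos hz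
  have hsphere : ∀ z ∈ Metric.sphere (0 : ι → ℝ) 1, z ≠ 0 := fun z hz =>
    ne_zero_of_mem_unit_sphere (⟨z, hz⟩ : Metric.sphere (0 : ι → ℝ) 1)
  obtain ⟨C, hC⟩ := (isCompact_sphere (0 : ι → ℝ) 1).exists_bound_of_continuousOn
    ((continuous_dotProduct_mulVec M).continuousOn.div
      (continuous_dotProduct_mulVec D).continuousOn fun z hz => (hpos z (hsphere z hz)).ne')
  refine ⟨max C 1, by positivity, fun z => ?_⟩
  rcases eq_or_ne z 0 with rfl | hz
  · simp
  obtain ⟨u, hu, hzu⟩ : ∃ u ∈ Metric.sphere (0 : ι → ℝ) 1, z = ‖z‖ • u :=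
    ⟨‖z‖⁻¹ • z, by simp [norm_smul, hz], by simp [smul_smul, hz]⟩
  have hratio : u ⬝ᵥ M *ᵥ u / u ⬝ᵥ D *ᵥ u ≤ max C 1 :=
    (le_abs_self _).trans ((hC u hu).trans (le_max_left C 1))
  rw [div_le_iff₀ (hpos u (hsphere u hu))] at hratio
  generalize ‖z‖ = r at hzu
  rw [hzu, smul_dotProduct_mulVec_smul, smul_dotProduct_mulVec_smul, mul_left_comm]
  exact mul_le_mul_of_nonneg_left hratio (sq_nonneg r)

lemma exists_forall_dotProduct_mulVec_le {κ : Type*} [Finite κ] (M : κ → Matrix ι ι ℝ) :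
    ∃ C, 0 < C ∧ ∀ k z, z ⬝ᵥ M k *ᵥ z ≤ C * (z ⬝ᵥ z) := by
  have hC : ∀ k, ∀ᶠ C in atTop, ∀ z, z ⬝ᵥ M k *ᵥ z ≤ C * (z ⬝ᵥ z) := fun k => by
    obtain ⟨C₀, -, hC₀⟩ := PosDef.one.exists_dotProduct_mulVec_le_mul (M k)
    filter_upwards [eventually_ge_atTop C₀] with C hC z
    have hzz : 0 ≤ z ⬝ᵥ z := by simpa using dotProduct_self_star_nonneg z
    simpa using (hC₀ z).trans (by simpa using mul_le_mul_of_nonneg_right hC hzz)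
  exact ((eventually_gt_atTop 0).and (eventually_all.2 hC)).exists

lemma exists_forall_dotProduct_mulVec_le_mul_of_posDef_sub {κ : Type*} [Finite κ]
    {P M : κ → Matrix ι ι ℝ} (hP : ∀ k, (P k).PosSemidef) (hPM : ∀ k, (P k - M k).PosDef) :
    ∃ ρ, 0 < ρ ∧ ρ < 1 ∧ ∀ k z, z ⬝ᵥ M k *ᵥ z ≤ ρ * (z ⬝ᵥ P k *ᵥ z) := by
  have hρ : ∀ k, ∀ᶠ ρ in 𝓝[<] 1, ∀ z, z ⬝ᵥ M k *ᵥ z ≤ ρ * (z ⬝ᵥ P k *ᵥ z) := fun k => by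
    obtain ⟨C, hC, hPC⟩ := (hPM k).exists_dotProduct_mulVec_le_mul (P k)
    filter_upwards [Ioo_mem_nhdsLT (show 1 - C⁻¹ < 1 by simpa using hC)] with ρ hρ z
    have hPz : 0 ≤ z ⬝ᵥ P k *ᵥ z := by simpa using (hP k).dotProduct_mulVec_nonneg z
    have hMz : z ⬝ᵥ M k *ᵥ z ≤ (1 - C⁻¹) * (z ⬝ᵥ P k *ᵥ z) := by
      have := hPC z
      rw [sub_mulVec, dotProduct_sub] at this
      rw [sub_mul, one_mul, inv_mul_eq_div, le_sub_iff_add_le, ← le_sub_iff_add_le',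
        div_le_iff₀ hC]
      linarith
    exact hMz.trans (mul_le_mul_of_nonneg_right hρ.1.le hPz)
  obtain ⟨ρ, ⟨hρ0, hρ1⟩, hρ⟩ :=
    (Eventually.and (Ioo_mem_nhdsLT zero_lt_one) (eventually_all.2 hρ)).exists
  exact ⟨ρ, hρ0, hρ1, hρ⟩

lemma PosSemidef.dotProduct_mulVec_comm {Q : Matrix ι ι ℝ} (hQ : Q.PosSemidef) (u v : ι → ℝ) :
    v ⬝ᵥ Q *ᵥ u = u ⬝ᵥ Q *ᵥ v := by
  rw [dotProduct_mulVec, dotProduct_comm, ← mulVec_transpose,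
    ← conjTranspose_eq_transpose_of_trivial, hQ.1.eq]

lemma PosSemidef.dotProduct_mulVec_add_le {Q : Matrix ι ι ℝ} (hQ : Q.PosSemidef) {t : ℝ}
    (ht : 0 < t) (u v : ι → ℝ) :
    (u + v) ⬝ᵥ Q *ᵥ (u + v) ≤ (1 + t) * (u ⬝ᵥ Q *ᵥ u) + (1 + t⁻¹) * (v ⬝ᵥ Q *ᵥ v) := by
  have hnonneg : 0 ≤ (t • u - v) ⬝ᵥ Q *ᵥ (t • u - v) := by
    simpa using hQ.dotProduct_mulVec_nonneg (t • u - v)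
  simp only [mulVec_add, mulVec_sub, mulVec_smul, add_dotProduct, sub_dotProduct, dotProduct_add,
    dotProduct_sub, smul_dotProduct, dotProduct_smul, smul_eq_mul, hQ.dotProduct_mulVec_comm v u]
    at hnonneg ⊢
  have hcross : 2 * (v ⬝ᵥ Q *ᵥ u) ≤ t * (u ⬝ᵥ Q *ᵥ u) + t⁻¹ * (v ⬝ᵥ Q *ᵥ v) := by
    have h := mul_le_mul_of_nonneg_left
      (show t * (2 * (v ⬝ᵥ Q *ᵥ u)) ≤ t * (t * (u ⬝ᵥ Q *ᵥ u)) + v ⬝ᵥ Q *ᵥ v by linarith)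
      (inv_nonneg.2 ht.le)
    rwa [mul_add, inv_mul_cancel_left₀ ht.ne', inv_mul_cancel_left₀ ht.ne'] at h
  linarith

end Matrix

lemma exists_pos_one_add_sq_mul_lt_one {ρ : ℝ} (hρ : ρ < 1) : ∃ t > 0, (1 + t) ^ 2 * ρ < 1 := by
  have h : Tendsto (fun t : ℝ => (1 + t) ^ 2 * ρ) (𝓝[>] 0) (𝓝 ρ) := by
    have := (show Continuous fun t : ℝ => (1 + t) ^ 2 * ρ by fun_prop).tendsto 0
    simpa using this.mono_left (nhdsWithin_le_nhds (s := Set.Ioi 0))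
  exact ((h.eventually (gt_mem_nhds hρ)).and self_mem_nhdsWithin).exists.imp
    fun _ ht => ⟨ht.2, ht.1⟩

lemma exists_one_add_mul_dotProduct_mulVec_add_le {κ ι ι' : Type*} [Finite κ] [Fintype ι]
    [Fintype ι'] {P Q A : κ → Matrix ι ι ℝ} (B : κ → Matrix ι ι' ℝ)
    (hP : ∀ p, (P p).PosSemidef) (hQ : ∀ p, (Q p).PosSemidef)
    (hPQ : ∀ p, (P p - (A p)ᵀ * Q p * A p).PosDef) :
    ∃ t > 0, ∃ q c, 0 < q ∧ q < 1 ∧ 0 < c ∧ ∀ p z v,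
      (1 + t) * ((A p *ᵥ z + B p *ᵥ v) ⬝ᵥ Q p *ᵥ (A p *ᵥ z + B p *ᵥ v)) ≤
        q * (z ⬝ᵥ P p *ᵥ z) + c * (v ⬝ᵥ v) := by
  obtain ⟨ρ, hρ0, hρ1, hρ⟩ := exists_forall_dotProduct_mulVec_le_mul_of_posDef_sub hP hPQ
  obtain ⟨cB, hcB, hcB_le⟩ := exists_forall_dotProduct_mulVec_le fun p => (B p)ᵀ * Q p * B p
  obtain ⟨t, ht, hq⟩ := exists_pos_one_add_sq_mul_lt_one hρ1
  refine ⟨t, ht, (1 + t) ^ 2 * ρ, (1 + t) * (1 + t⁻¹) * cB, by positivity, hq, by positivity,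
    fun p z v => ?_⟩
  have hA := hρ p z
  have hB := hcB_le p v
  rw [dotProduct_transpose_mul_mul_mulVec] at hA hB
  calc (1 + t) * ((A p *ᵥ z + B p *ᵥ v) ⬝ᵥ Q p *ᵥ (A p *ᵥ z + B p *ᵥ v))
      ≤ (1 + t) * ((1 + t) * (ρ * (z ⬝ᵥ P p *ᵥ z)) + (1 + t⁻¹) * (cB * (v ⬝ᵥ v))) := by
        gcongr
        exact ((hQ p).dotProduct_mulVec_add_le ht _ _).trans (by gcongr)
    _ = (1 + t) ^ 2 * ρ * (z ⬝ᵥ P p *ᵥ z) + (1 + t) * (1 + t⁻¹) * cB * (v ⬝ᵥ v) := by ring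

section Measurability

variable {Ω ι κ : Type*} [Fintype ι] {mΩ : MeasurableSpace Ω}

lemma Measurable.matrix_mulVec {M : Ω → Matrix κ ι ℝ} {y : Ω → ι → ℝ}
    (hM : ∀ i j, Measurable fun ω => M ω i j) (hy : Measurable y) :
    Measurable fun ω => M ω *ᵥ y ω := by
  refine measurable_pi_lambda _ fun i => ?_
  simp only [mulVec, dotProduct]
  fun_prop

lemma Measurable.matrix_mulVec_comp {α : Type*} [MeasurableSpace α] [DiscreteMeasurableSpace α]
    (M : α → Matrix κ ι ℝ) {s : Ω → α} (hs : Measurable s) {y : Ω → ι → ℝ} (hy : Measurable y) :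
    Measurable fun ω => M (s ω) *ᵥ y ω :=
  .matrix_mulVec (fun i j => (Measurable.of_discrete (f := fun p => M p i j)).comp hs) hy

lemma Measurable.dotProduct {y z : Ω → ι → ℝ} (hy : Measurable y) (hz : Measurable z) :
    Measurable fun ω => y ω ⬝ᵥ z ω := by
  simp only [_root_.dotProduct]
  fun_prop

end Measurability

theorem condExp_mode_ae_eq_sum {Ω ι : Type*} [Fintype ι] [MeasurableSpace ι]
    [MeasurableSingletonClass ι] {m m0 : MeasurableSpace Ω} {μ : Measure Ω} [IsFiniteMeasure μ]
    {τ : Ω → ι} (hτ : Measurable τ) {F : ι → Ω → ℝ} (hF : ∀ j, StronglyMeasurable[m] (F j))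
    (hint : Integrable (fun ω => F (τ ω) ω) μ) {π : ι → Ω → ℝ}
    (hπ : ∀ j, μ[{ω | τ ω = j}.indicator (fun _ => (1 : ℝ))|m] =ᵐ[μ] π j) :
    μ[fun ω => F (τ ω) ω|m] =ᵐ[μ] fun ω => ∑ j, F j ω * π j ω := by
  have hS : ∀ j, MeasurableSet {ω | τ ω = j} := fun j => hτ (measurableSet_singleton j)
  have hterm : ∀ j, F j * {ω | τ ω = j}.indicator (fun _ => 1) =
      {ω | τ ω = j}.indicator fun ω => F (τ ω) ω := by
    intro j
    ext ω
    by_cases h : τ ω = j <;> simp [h]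
  have hsplit : (fun ω => F (τ ω) ω) = ∑ j, F j * {ω | τ ω = j}.indicator (fun _ => 1) := by
    ext ω
    simp [hterm, Set.indicator_apply]
  have hterm_int : ∀ j, Integrable (F j * {ω | τ ω = j}.indicator (fun _ => 1)) μ := fun j =>
    hterm j ▸ hint.indicator (hS j)
  filter_upwards [hsplit ▸ condExp_finsetSum (fun j _ => hterm_int j) m,
    ae_all_iff.2 fun j => condExp_mul_of_stronglyMeasurable_left (m := m) (hF j) (hterm_int j)
      ((integrable_const 1).indicator (hS j)),
    ae_all_iff.2 hπ] with ω hsum hmul hπω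
  simp [hsum, Finset.sum_apply, hmul, hπω]

lemma condExp_dotProduct_self_ae_eq_of_indep {Ω ι : Type*} [Fintype ι] {m m0 : MeasurableSpace Ω}
    {μ : Measure Ω} [IsFiniteMeasure μ] (hm : m ≤ m0) {w : Ω → ι → ℝ} {η : Measure (ι → ℝ)}
    (hw : Measurable w) (hw_indep : Indep (MeasurableSpace.comap w inferInstance) m μ)
    (hw_law : μ.map w = η) :
    μ[fun ω => w ω ⬝ᵥ w ω|m] =ᵐ[μ] fun _ => ∫ v, v ⬝ᵥ v ∂η := by
  have hw_comap : Measurable[MeasurableSpace.comap w inferInstance] w :=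
    measurable_iff_comap_le.2 le_rfl
  have hww : Measurable fun v : ι → ℝ => v ⬝ᵥ v := measurable_id.dotProduct measurable_id
  rw [← hw_law, integral_map hw.aemeasurable hww.aestronglyMeasurable]
  exact condExp_indep_eq (measurable_iff_comap_le.1 hw) hm
    (hw_comap.dotProduct hw_comap).stronglyMeasurable hw_indep

/-- Young's inequality for `a = (a + w) - w`. -/
lemma integrable_dotProduct_mulVec_of_integrable_add {Ω ι : Type*} [Fintype ι]
    {mΩ : MeasurableSpace Ω} {μ : Measure Ω} {a w : Ω → ι → ℝ} {Q : Ω → Matrix ι ι ℝ}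
    (hQ_psd : ∀ ω, (Q ω).PosSemidef)
    (haQa : AEStronglyMeasurable (fun ω => a ω ⬝ᵥ Q ω *ᵥ a ω) μ)
    (hint : Integrable (fun ω => (a ω + w ω) ⬝ᵥ Q ω *ᵥ (a ω + w ω)) μ)
    (hwQw : Integrable (fun ω => w ω ⬝ᵥ Q ω *ᵥ w ω) μ) :
    Integrable (fun ω => a ω ⬝ᵥ Q ω *ᵥ a ω) μ := by
  refine ((hint.const_mul 2).add (hwQw.const_mul 2)).mono' haQa (ae_of_all _ fun ω => ?_)
  have h := (hQ_psd ω).dotProduct_mulVec_add_le one_pos (a ω + w ω) (-w ω)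
  rw [add_neg_cancel_right, mulVec_neg, dotProduct_neg, neg_dotProduct, neg_neg] at h
  rw [Real.norm_of_nonneg (by simpa using (hQ_psd ω).dotProduct_mulVec_nonneg (a ω))]
  norm_num at h ⊢
  linarith

theorem condExp_dotProduct_mulVec_add_le {Ω ι : Type*} [Fintype ι] {m m0 : MeasurableSpace Ω}
    {μ : Measure Ω} [IsFiniteMeasure μ] (hm : m ≤ m0) {a w : Ω → ι → ℝ} {Q : Ω → Matrix ι ι ℝ}
    {C t : ℝ} {η : Measure (ι → ℝ)} (ha : Measurable[m] a)
    (hQ : ∀ i j, Measurable[m] fun ω => Q ω i j) (hQ_psd : ∀ ω, (Q ω).PosSemidef)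
    (hQ_le : ∀ ω v, v ⬝ᵥ Q ω *ᵥ v ≤ C * (v ⬝ᵥ v)) (hw : Measurable w)
    (hw_indep : Indep (MeasurableSpace.comap w inferInstance) m μ) (hw_law : μ.map w = η)
    (hη : Integrable (fun v => v ⬝ᵥ v) η)
    (hint : Integrable (fun ω => (a ω + w ω) ⬝ᵥ Q ω *ᵥ (a ω + w ω)) μ) (ht : 0 < t) :
    μ[fun ω => (a ω + w ω) ⬝ᵥ Q ω *ᵥ (a ω + w ω)|m] ≤ᵐ[μ]
      fun ω => (1 + t) * (a ω ⬝ᵥ Q ω *ᵥ a ω) + (1 + t⁻¹) * C * ∫ v, v ⬝ᵥ v ∂η := by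
  have hww_int : Integrable (fun ω => w ω ⬝ᵥ w ω) μ := by
    rw [← hw_law] at hη
    exact (integrable_map_measure hη.1 hw.aemeasurable).1 hη
  have hwQw_int : Integrable (fun ω => w ω ⬝ᵥ Q ω *ᵥ w ω) μ := by
    refine (hww_int.const_mul C).mono'
      (hw.dotProduct (.matrix_mulVec (fun i j => (hQ i j).mono hm le_rfl) hw)).aestronglyMeasurable
      (ae_of_all _ fun ω => ?_)
    rw [Real.norm_of_nonneg (by simpa using (hQ_psd ω).dotProduct_mulVec_nonneg (w ω))]
    exact hQ_le ω (w ω)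
  have haQa_meas : Measurable[m] fun ω => a ω ⬝ᵥ Q ω *ᵥ a ω := ha.dotProduct (.matrix_mulVec hQ ha)
  have haQa_int := integrable_dotProduct_mulVec_of_integrable_add hQ_psd
    (haQa_meas.mono hm le_rfl).aestronglyMeasurable hint hwQw_int
  have hyoung : ∀ ω, (a ω + w ω) ⬝ᵥ Q ω *ᵥ (a ω + w ω) ≤
      (1 + t) * (a ω ⬝ᵥ Q ω *ᵥ a ω) + (1 + t⁻¹) * C * (w ω ⬝ᵥ w ω) := fun ω => by
    have := (hQ_psd ω).dotProduct_mulVec_add_le ht (a ω) (w ω)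
    have := mul_le_mul_of_nonneg_left (hQ_le ω (w ω)) (by positivity : (0 : ℝ) ≤ 1 + t⁻¹)
    linarith
  have haQa_cond : μ[fun ω => (1 + t) * (a ω ⬝ᵥ Q ω *ᵥ a ω)|m] =
      fun ω => (1 + t) * (a ω ⬝ᵥ Q ω *ᵥ a ω) :=
    condExp_of_stronglyMeasurable hm (measurable_const.mul haQa_meas).stronglyMeasurable
      (haQa_int.const_mul _)
  filter_upwards [condExp_mono (m := m) hint ((haQa_int.const_mul _).add (hww_int.const_mul _))
      (ae_of_all _ hyoung),
    condExp_add (haQa_int.const_mul (1 + t)) (hww_int.const_mul ((1 + t⁻¹) * C)) m,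
    condExp_smul ((1 + t⁻¹) * C) (fun ω => w ω ⬝ᵥ w ω) m,
    condExp_dotProduct_self_ae_eq_of_indep hm hw hw_indep hw_law] with ω hmono hadd hsmul hcond
  rw [hadd, Pi.add_apply, haQa_cond] at hmono
  exact hmono.trans_eq (congrArg _ (hsmul.trans (congrArg _ hcond)))

theorem condExp_switched_dotProduct_mulVec_le {Ω ι κ : Type*} [Fintype ι] [Fintype κ]
    [MeasurableSpace κ] [MeasurableSingletonClass κ] {m m0 : MeasurableSpace Ω} {μ : Measure Ω}
    [IsFiniteMeasure μ] (hm : m ≤ m0) {a w : Ω → ι → ℝ} {τ : Ω → κ} {P : κ → Matrix ι ι ℝ}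
    {π : κ → Ω → ℝ} {C t : ℝ} {η : Measure (ι → ℝ)} (ha : Measurable[m] a) (hw : Measurable w)
    (hτ : Measurable τ) (hπ_meas : ∀ j, Measurable[m] (π j))
    (hπ : ∀ j, μ[{ω | τ ω = j}.indicator (fun _ => (1 : ℝ))|
      m ⊔ MeasurableSpace.comap w inferInstance] =ᵐ[μ] π j)
    (hQ_psd : ∀ ω, (∑ j, π j ω • P j).PosSemidef)
    (hQ_le : ∀ ω v, v ⬝ᵥ (∑ j, π j ω • P j) *ᵥ v ≤ C * (v ⬝ᵥ v)) (hC : 0 ≤ C)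
    (hw_indep : Indep (MeasurableSpace.comap w inferInstance) m μ) (hw_law : μ.map w = η)
    (hη : Integrable (fun v => v ⬝ᵥ v) η) (ht : 0 < t) :
    μ[fun ω => (a ω + w ω) ⬝ᵥ P (τ ω) *ᵥ (a ω + w ω)|m] ≤ᵐ[μ]
      fun ω => (1 + t) * (a ω ⬝ᵥ (∑ j, π j ω • P j) *ᵥ a ω) + (1 + t⁻¹) * C * ∫ v, v ⬝ᵥ v ∂η := by
  by_cases hV : Integrable (fun ω => (a ω + w ω) ⬝ᵥ P (τ ω) *ᵥ (a ω + w ω)) μ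
  swap
  · rw [condExp_of_not_integrable hV]
    refine ae_of_all _ fun ω => add_nonneg (mul_nonneg (by positivity) ?_)
      (mul_nonneg (by positivity) (integral_nonneg fun v => ?_))
    · simpa using (hQ_psd ω).dotProduct_mulVec_nonneg (a ω)
    · simpa using dotProduct_self_star_nonneg v
  have hG : m ⊔ MeasurableSpace.comap w inferInstance ≤ m0 :=
    sup_le hm (measurable_iff_comap_le.1 hw)
  have hx : Measurable[m ⊔ MeasurableSpace.comap w inferInstance] fun ω => a ω + w ω :=
    (ha.mono le_sup_left le_rfl).add ((measurable_iff_comap_le.2 le_rfl).mono le_sup_right le_rfl)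
  have hVG : μ[fun ω => (a ω + w ω) ⬝ᵥ P (τ ω) *ᵥ (a ω + w ω)|
      m ⊔ MeasurableSpace.comap w inferInstance] =ᵐ[μ]
      fun ω => (a ω + w ω) ⬝ᵥ (∑ j, π j ω • P j) *ᵥ (a ω + w ω) :=
    (condExp_mode_ae_eq_sum hτ (F := fun j ω => (a ω + w ω) ⬝ᵥ P j *ᵥ (a ω + w ω))
      (fun j => ((continuous_dotProduct_mulVec (P j)).measurable.comp hx).stronglyMeasurable)
      hV hπ).trans (ae_of_all _ fun ω => by simp only [dotProduct_sum_smul_mulVec, mul_comm])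
  have hQ : ∀ i j, Measurable[m] fun ω => (∑ l, π l ω • P l) i j := fun i j => by
    simp only [Matrix.sum_apply, Matrix.smul_apply, smul_eq_mul]
    exact Finset.measurable_sum _ fun l _ => (hπ_meas l).mul measurable_const
  filter_upwards [(condExp_condExp_of_le le_sup_left hG).symm.trans (condExp_congr_ae hVG),
    condExp_dotProduct_mulVec_add_le hm ha hQ hQ_psd hQ_le hw hw_indep hw_law hη
      (integrable_condExp.congr hVG) ht] with ω hVω hnoise
  exact hVω.trans_le hnoise

lemma integrable_dotProduct_self_pi_gaussianReal {ι : Type*} [Fintype ι] :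
    Integrable (fun v : ι → ℝ => v ⬝ᵥ v) (Measure.pi fun _ : ι => gaussianReal 0 1) := by
  simp only [_root_.dotProduct]
  refine integrable_finsetSum _ fun i _ => ?_
  have h := (memLp_id_gaussianReal (μ := 0) (v := 1) 2).integrable_sq
  simpa [sq, Function.comp_def] using
    (measurePreserving_eval (fun _ : ι => gaussianReal 0 1) i).integrable_comp_of_integrable h

theorem sdjls_lyapunov_drift_general
    {Ω : Type*} {m0 : MeasurableSpace Ω} (μ : Measure Ω) [IsProbabilityMeasure μ]
    (ℱ : Filtration ℕ m0)
    (N n m : ℕ)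
    (A : Fin N → Matrix (Fin n) (Fin n) ℝ)
    (B : Fin N → Matrix (Fin n) (Fin m) ℝ)
    (K : Fin N → Matrix (Fin m) (Fin n) ℝ)
    (θ : ℕ → Ω → Fin N) (x : ℕ → Ω → Fin n → ℝ)
    (w : ℕ → Ω → Fin n → ℝ) (ν : ℕ → Ω → Fin m → ℝ)
    -- adaptedness of the mode, state and offset processes
    (hθ : ∀ k, Measurable[ℱ k] (θ k))
    (hx : ∀ k, Measurable[ℱ k] (x k))
    (hν : ∀ k, Measurable[ℱ k] (ν k))
    -- the noise is `ℱ_{k+1}`-measurable, independent of `ℱ_k`, standard Gaussian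
    (hw_meas : ∀ k, Measurable[ℱ (k + 1)] (w k))
    (hw_indep : ∀ k, Indep (MeasurableSpace.comap (w k) inferInstance) (ℱ k) μ)
    (hw_law : ∀ k, μ.map (w k) = Measure.pi (fun _ : Fin n => gaussianReal 0 1))
    -- closed-loop dynamics
    (hdyn : ∀ k ω, x (k + 1) ω =
      (A (θ k ω) + B (θ k ω) * K (θ k ω)).mulVec (x k ω)
        + (B (θ k ω)).mulVec (ν k ω) + w k ω)
    -- state-dependent transition probabilities
    (C1 : Set (Fin n → ℝ)) (hC1 : MeasurableSet C1)
    (lam mu' : Matrix (Fin N) (Fin N) ℝ)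
    (hlam_nonneg : ∀ i j, 0 ≤ lam i j) (hmu_nonneg : ∀ i j, 0 ≤ mu' i j)
    (htrans : ∀ k (j : Fin N),
      μ[Set.indicator {ω | θ (k + 1) ω = j} (fun _ => (1 : ℝ))|
          (ℱ k) ⊔ MeasurableSpace.comap (w k) inferInstance]
        =ᵐ[μ] fun ω => if x k ω ∈ C1 then lam (θ k ω) j else mu' (θ k ω) j)
    -- LMI hypothesis
    (P : Fin N → Matrix (Fin n) (Fin n) ℝ)
    (hP : ∀ i, (P i).PosDef)
    (hLMI1 : ∀ i, (P i - (A i + B i * K i)ᵀ * (∑ j, lam i j • P j)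
      * (A i + B i * K i)).PosDef)
    (hLMI2 : ∀ i, (P i - (A i + B i * K i)ᵀ * (∑ j, mu' i j • P j)
      * (A i + B i * K i)).PosDef) :
    ∃ q c₁ c₂ : ℝ, 0 < q ∧ q < 1 ∧ 0 < c₁ ∧ 0 < c₂ ∧
      ∀ k : ℕ, ∀ᵐ ω ∂μ,
        (μ[fun ω' => x (k + 1) ω' ⬝ᵥ (P (θ (k + 1) ω')).mulVec (x (k + 1) ω')|ℱ k]) ω ≤
          q * (x k ω ⬝ᵥ (P (θ k ω)).mulVec (x k ω)) + c₁ * (∑ i, (ν k ω i) ^ 2) + c₂ := by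
  -- a regime is a mode together with whether the state lies in `C1`
  let row : Fin N × Bool → Fin N → ℝ := fun p => if p.2 then lam p.1 else mu' p.1
  let Q : Fin N × Bool → Matrix (Fin n) (Fin n) ℝ := fun p => ∑ j, row p j • P j
  have hQ_psd : ∀ p, (Q p).PosSemidef := fun p => posSemidef_sum _ fun j _ =>
    (hP j).posSemidef.smul (by rcases p with ⟨i, _ | _⟩ <;> simp [row, hlam_nonneg, hmu_nonneg])
  obtain ⟨t, ht, q, c₁, hq0, hq1, hc₁, hstep⟩ := exists_one_add_mul_dotProduct_mulVec_add_le
    (P := fun p : Fin N × Bool => P p.1) (A := fun p => A p.1 + B p.1 * K p.1) (fun p => B p.1)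
    (fun p => (hP p.1).posSemidef) hQ_psd (by rintro ⟨i, _ | _⟩; exacts [hLMI2 i, hLMI1 i])
  obtain ⟨cQ, hcQ, hcQ_le⟩ := exists_forall_dotProduct_mulVec_le Q
  set σ2 := ∫ v, v ⬝ᵥ v ∂(Measure.pi fun _ : Fin n => gaussianReal 0 1)
  have hσ2 : 0 ≤ σ2 := integral_nonneg fun v => by simpa using dotProduct_self_star_nonneg v
  refine ⟨q, c₁, (1 + t⁻¹) * cQ * σ2 + 1, hq0, hq1, hc₁, by positivity, fun k => ?_⟩
  let π : Fin N → Ω → ℝ := fun j ω => if x k ω ∈ C1 then lam (θ k ω) j else mu' (θ k ω) j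
  have hQπ : ∀ ω, ∑ j, π j ω • P j = Q (θ k ω, decide (x k ω ∈ C1)) := fun ω => by
    by_cases h : x k ω ∈ C1 <;> simp [π, Q, row, h]
  have hπ : ∀ j, Measurable[ℱ k] (π j) := fun j =>
    Measurable.ite (hx k hC1) ((Measurable.of_discrete (f := fun i => lam i j)).comp (hθ k))
      ((Measurable.of_discrete (f := fun i => mu' i j)).comp (hθ k))
  have ha : Measurable[ℱ k] fun ω => (A (θ k ω) + B (θ k ω) * K (θ k ω)) *ᵥ x k ω +
      B (θ k ω) *ᵥ ν k ω :=
    ((hθ k).matrix_mulVec_comp (fun i => A i + B i * K i) (hx k)).add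
      ((hθ k).matrix_mulVec_comp B (hν k))
  have hdrift := condExp_switched_dotProduct_mulVec_le (ℱ.le k) ha
    ((hw_meas k).mono (ℱ.le _) le_rfl) ((hθ (k + 1)).mono (ℱ.le _) le_rfl) hπ (htrans k)
    (fun ω => hQπ ω ▸ hQ_psd _) (fun ω => hQπ ω ▸ hcQ_le _) hcQ.le (hw_indep k) (hw_law k)
    integrable_dotProduct_self_pi_gaussianReal ht
  rw [show x (k + 1) = _ from funext (hdyn k)]
  filter_upwards [hdrift] with ω hω
  have hstepω := hstep (θ k ω, decide (x k ω ∈ C1)) (x k ω) (ν k ω)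
  rw [hQπ] at hω
  rw [show ν k ω ⬝ᵥ ν k ω = ∑ i, ν k ω i ^ 2 by simp [dotProduct, sq]] at hstepω
  linarith

/-- One-step conditional drift inequality for the Lyapunov function `V(x,i) = xᵀ P_i x` of the
closed-loop SDJLS under the standing assumptions and LMI hypothesis: there exist `q ∈ (0,1)`
and constants `c₁, c₂ > 0` such that, for every `k`, almost surely,
`E[x_{k+1}ᵀ P_{θ_{k+1}} x_{k+1} | ℱ_k] ≤ q ⬝ x_kᵀ P_{θ_k} x_k + c₁ ‖ν_k‖² + c₂`. -/
theorem sdjls_lyapunov_drift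
    {Ω : Type*} {m0 : MeasurableSpace Ω} (μ : Measure Ω) [IsProbabilityMeasure μ]
    (ℱ : Filtration ℕ m0)
    (N n m : ℕ) (hN : 0 < N) (hn : 0 < n) (hm : 0 < m)
    (A : Fin N → Matrix (Fin n) (Fin n) ℝ)
    (B : Fin N → Matrix (Fin n) (Fin m) ℝ)
    (K : Fin N → Matrix (Fin m) (Fin n) ℝ)
    (θ : ℕ → Ω → Fin N) (x : ℕ → Ω → Fin n → ℝ)
    (w : ℕ → Ω → Fin n → ℝ) (ν : ℕ → Ω → Fin m → ℝ)
    -- adaptedness of the mode, state and offset processes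
    (hθ : ∀ k, Measurable[ℱ k] (θ k))
    (hx : ∀ k, Measurable[ℱ k] (x k))
    (hν : ∀ k, Measurable[ℱ k] (ν k))
    -- the noise is `ℱ_{k+1}`-measurable, independent of `ℱ_k`, standard Gaussian
    (hw_meas : ∀ k, Measurable[ℱ (k + 1)] (w k))
    (hw_indep : ∀ k, Indep (MeasurableSpace.comap (w k) inferInstance) (ℱ k) μ)
    (hw_law : ∀ k, μ.map (w k) = Measure.pi (fun _ : Fin n => gaussianReal 0 1))
    -- closed-loop dynamics
    (hdyn : ∀ k ω, x (k + 1) ω =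
      (A (θ k ω) + B (θ k ω) * K (θ k ω)).mulVec (x k ω)
        + (B (θ k ω)).mulVec (ν k ω) + w k ω)
    -- state-dependent transition probabilities
    (C1 : Set (Fin n → ℝ)) (hC1 : MeasurableSet C1)
    (lam mu' : Matrix (Fin N) (Fin N) ℝ)
    (hlam_nonneg : ∀ i j, 0 ≤ lam i j) (hmu_nonneg : ∀ i j, 0 ≤ mu' i j)
    (hlam_row : ∀ i, ∑ j, lam i j = 1) (hmu_row : ∀ i, ∑ j, mu' i j = 1)
    (htrans : ∀ k (j : Fin N),
      μ[Set.indicator {ω | θ (k + 1) ω = j} (fun _ => (1 : ℝ))|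
          (ℱ k) ⊔ MeasurableSpace.comap (w k) inferInstance]
        =ᵐ[μ] fun ω => if x k ω ∈ C1 then lam (θ k ω) j else mu' (θ k ω) j)
    -- LMI hypothesis
    (P : Fin N → Matrix (Fin n) (Fin n) ℝ)
    (hP : ∀ i, (P i).PosDef)
    (hLMI1 : ∀ i, (P i - (A i + B i * K i)ᵀ * (∑ j, lam i j • P j)
      * (A i + B i * K i)).PosDef)
    (hLMI2 : ∀ i, (P i - (A i + B i * K i)ᵀ * (∑ j, mu' i j • P j)
      * (A i + B i * K i)).PosDef) :
    ∃ q c₁ c₂ : ℝ, 0 < q ∧ q < 1 ∧ 0 < c₁ ∧ 0 < c₂ ∧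
      ∀ k : ℕ, ∀ᵐ ω ∂μ,
        (μ[fun ω' => x (k + 1) ω' ⬝ᵥ (P (θ (k + 1) ω')).mulVec (x (k + 1) ω')|ℱ k]) ω ≤
          q * (x k ω ⬝ᵥ (P (θ k ω)).mulVec (x k ω)) + c₁ * (∑ i, (ν k ω i) ^ 2) + c₂ :=
  sdjls_lyapunov_drift_general μ ℱ N n m A B K θ x w ν hθ hx hν hw_meas hw_indep hw_law hdyn C1 hC1
    lam mu' hlam_nonneg hmu_nonneg htrans P hP hLMI1 hLMI2
end

section
/- Let N, n, m be positive integers, let λ ∈ ℝ^{N×N} have nonnegative entries, and for each i ∈ {1,…,N} let A_i ∈ ℝ^{n×n}, B_i ∈ ℝ^{n×m}, X_i ∈ ℝ^{n×n} symmetric positive definite, and Y_i ∈ ℝ^{m×n}. Let Λ_i ∈ ℝ^{Nn×n} be the block column stack of √λ_{i1}·I_n, …, √λ_{iN}·I_n and let X_D = diag(X_1,…,X_N) ∈ ℝ^{Nn×Nn}. If for every i the symmetric block matrix [[−X_D, Λ_i(A_i X_i + B_i Y_i)], [(A_i X_i + B_i Y_i)ᵀ Λ_iᵀ, −X_i]]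 is negative definite, then, setting P_i = X_i⁻¹, K_i = Y_i X_i⁻¹ and Ã_i = A_i + B_i K_i, the matrix Ã_iᵀ(Σ_{j=1}^N λ_{ij} P_j)Ã_i − P_i is negative definite for every i. -/
/-!
The LMI is the negation of `[[X_D, -Λ_i M_i], [-(Λ_i M_i)ᵀ, X_i]]` with `M_i = A_i X_i + B_i Y_i`.
Its Schur complement with respect to the block `X_D` gives `X_i - M_iᵀ (Λ_iᵀ X_D⁻¹ Λ_i) M_i ≻ 0`,
and `Λ_iᵀ X_D⁻¹ Λ_i = ∑ⱼ λ_{ij} X_j⁻¹`. Congruence by `X_i⁻¹` turns this into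
`X_i⁻¹ - Ã_iᵀ (∑ⱼ λ_{ij} X_j⁻¹) Ã_i ≻ 0`, because `M_i X_i⁻¹ = A_i + B_i Y_i X_i⁻¹ = Ã_i`.
-/

open Matrix

namespace Matrix

variable {m n o : Type*} [Fintype m] [Fintype n]

theorem PosDef.sub_conjTranspose_mul_inv_mul_of_fromBlocks [DecidableEq m]
    {K : Type*} [Field K] [PartialOrder K] [StarRing K]
    {A : Matrix m m K} {B : Matrix m n K} {D : Matrix n n K}
    (h : (fromBlocks A B Bᴴ D).PosDef) : (D - Bᴴ * A⁻¹ * B).PosDef := by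
  have hA : A.PosDef := h.submatrix Sum.inl_injective
  let := hA.isUnit.invertible
  refine .of_dotProduct_mulVec_pos ((IsHermitian.fromBlocks₁₁ B D hA.1).1 h.1) fun y hy => ?_
  have hv : (-((A⁻¹ * B) *ᵥ y) ⊕ᵥ y) ≠ 0 := fun h0 =>
    hy (by simpa using congrArg (· ∘ Sum.inr) h0)
  have := h.dotProduct_mulVec_pos hv
  rwa [dotProduct_mulVec, schur_complement_eq₁₁ B D _ _ hA.1, neg_add_cancel, dotProduct_zero,
    zero_add, ← dotProduct_mulVec] at this

theorem PosDef.inv_sub_of_sub_conjTranspose_mul_mul [DecidableEq n]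
    {K : Type*} [Field K] [PartialOrder K] [StarRing K]
    {X : Matrix n n K} (hX : X.IsHermitian) (hXu : IsUnit X) {M : Matrix m n K}
    {S : Matrix m m K} (h : (X - Mᴴ * S * M).PosDef) :
    (X⁻¹ - (M * X⁻¹)ᴴ * S * (M * X⁻¹)).PosDef := by
  have hXinv : (X⁻¹)ᴴ = X⁻¹ := hX.inv.eq
  have := h.conjTranspose_mul_mul_same (mulVec_injective_of_isUnit (isUnit_nonsing_inv_iff.2 hXu))
  convert this using 1
  rw [hXinv, Matrix.mul_sub, Matrix.sub_mul, nonsing_inv_mul _ ((isUnit_iff_isUnit_det _).1 hXu),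
    Matrix.one_mul, conjTranspose_mul, hXinv]
  simp only [Matrix.mul_assoc]

variable [DecidableEq n] [Fintype o] [DecidableEq o]

theorem inv_blockDiagonal {α : Type*} [CommRing α] {M : o → Matrix n n α}
    (hM : ∀ k, IsUnit (M k)) : (blockDiagonal M)⁻¹ = blockDiagonal fun k => (M k)⁻¹ := by
  refine inv_eq_right_inv ?_
  rw [← blockDiagonal_mul, ← blockDiagonal_one]
  congr 1
  funext k
  exact mul_nonsing_inv _ ((isUnit_iff_isUnit_det _).1 (hM k))

def scalarColumnStack {α : Type*} [Semiring α] (s : o → α) : Matrix (n × o) n α :=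
  fun p b => s p.2 * if p.1 = b then 1 else 0

theorem transpose_scalarColumnStack_mul_blockDiagonal_mul {α : Type*} [CommSemiring α]
    (s : o → α) (P : o → Matrix n n α) :
    (scalarColumnStack (n := n) s)ᵀ * blockDiagonal P * scalarColumnStack (n := n) s =
      ∑ k, (s k * s k) • P k := by
  ext a b
  simp only [mul_apply, transpose_apply, scalarColumnStack, blockDiagonal_apply,
    Fintype.sum_prod_type, sum_apply, smul_apply, smul_eq_mul, mul_ite, ite_mul, mul_one,
    mul_zero, zero_mul, Finset.sum_ite_eq', Finset.mem_univ, if_true]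
  rw [Finset.sum_comm]
  simp only [Finset.sum_ite_eq', Finset.mem_univ, if_true]
  exact Finset.sum_congr rfl fun k _ => by ring

end Matrix

theorem synthesis_lmi_general
    (N n m : ℕ)
    (lam : Matrix (Fin N) (Fin N) ℝ) (hlam : ∀ i j, 0 ≤ lam i j)
    (A : Fin N → Matrix (Fin n) (Fin n) ℝ)
    (B : Fin N → Matrix (Fin n) (Fin m) ℝ)
    (X : Fin N → Matrix (Fin n) (Fin n) ℝ)
    (Y : Fin N → Matrix (Fin m) (Fin n) ℝ)
    (hX : ∀ i, (X i).PosDef)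
    (Λ : Fin N → Matrix (Fin n × Fin N) (Fin n) ℝ)
    (hΛ : ∀ i, Λ i = fun p b => Real.sqrt (lam i p.2) * (if p.1 = b then 1 else 0))
    (XD : Matrix (Fin n × Fin N) (Fin n × Fin N) ℝ)
    (hXD : XD = Matrix.blockDiagonal (fun j => X j))
    (hLMI : ∀ i : Fin N,
      (-(Matrix.fromBlocks (-XD) (Λ i * (A i * X i + B i * Y i))
          ((A i * X i + B i * Y i)ᵀ * (Λ i)ᵀ) (-(X i)))).PosDef) :
    ∀ i : Fin N,
      ((X i)⁻¹ -
        (A i + B i * (Y i * (X i)⁻¹))ᵀ * (∑ j, lam i j • (X j)⁻¹) *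
          (A i + B i * (Y i * (X i)⁻¹))).PosDef := by
  intro i
  set M := A i * X i + B i * Y i
  have hclosedLoop : M * (X i)⁻¹ = A i + B i * (Y i * (X i)⁻¹) := by
    rw [Matrix.add_mul, Matrix.mul_assoc, Matrix.mul_assoc,
      mul_nonsing_inv _ ((isUnit_iff_isUnit_det _).1 (hX i).isUnit), Matrix.mul_one]
  have hweights : (Λ i)ᵀ * XD⁻¹ * Λ i = ∑ j, lam i j • (X j)⁻¹ := by
    have hstack : Λ i = scalarColumnStack fun j => √(lam i j) := hΛ i
    rw [hstack, hXD, inv_blockDiagonal fun j => (hX j).isUnit,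
      transpose_scalarColumnStack_mul_blockDiagonal_mul]
    exact Finset.sum_congr rfl fun j _ => by rw [Real.mul_self_sqrt (hlam i j)]
  have hblocks : -(fromBlocks (-XD) (Λ i * M) (Mᵀ * (Λ i)ᵀ) (-(X i))) =
      fromBlocks XD (-(Λ i * M)) (-(Λ i * M))ᴴ (X i) := by
    simp [fromBlocks_neg, transpose_mul]
  have hschur : (X i - Mᴴ * ((Λ i)ᵀ * XD⁻¹ * Λ i) * M).PosDef := by
    have := (hblocks ▸ hLMI i).sub_conjTranspose_mul_inv_mul_of_fromBlocks
    simpa [transpose_mul, Matrix.mul_assoc] using this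
  rw [hweights] at hschur
  simpa [hclosedLoop] using
    PosDef.inv_sub_of_sub_conjTranspose_mul_mul (hX i).1 (hX i).isUnit hschur

/-- Proposition 2 (synthesis LMI): if for every mode `i` the block matrix
`[[−X_D, Λ_i(A_i X_i + B_i Y_i)], [∗, −X_i]]` is negative definite (stated here as positive
definiteness of its negation), where `Λ_i` is the block column stack of `√λ_{i1} Iₙ, …, √λ_{iN} Iₙ`
and `X_D = diag(X_1, …, X_N)`, then with `P_i = X_i⁻¹`, `K_i = Y_i X_i⁻¹` and
`Ã_i = A_i + B_i K_i`, the matrix `Ã_iᵀ (∑ⱼ λ_{ij} P_j) Ã_i − P_i` is negative definite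
(stated as positive definiteness of `P_i − Ã_iᵀ (∑ⱼ λ_{ij} P_j) Ã_i`). -/
theorem synthesis_lmi
    (N n m : ℕ) (hN : 0 < N) (hn : 0 < n) (hm : 0 < m)
    (lam : Matrix (Fin N) (Fin N) ℝ) (hlam : ∀ i j, 0 ≤ lam i j)
    (A : Fin N → Matrix (Fin n) (Fin n) ℝ)
    (B : Fin N → Matrix (Fin n) (Fin m) ℝ)
    (X : Fin N → Matrix (Fin n) (Fin n) ℝ)
    (Y : Fin N → Matrix (Fin m) (Fin n) ℝ)
    (hX : ∀ i, (X i).PosDef)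
    (Λ : Fin N → Matrix (Fin n × Fin N) (Fin n) ℝ)
    (hΛ : ∀ i, Λ i = fun p b => Real.sqrt (lam i p.2) * (if p.1 = b then 1 else 0))
    (XD : Matrix (Fin n × Fin N) (Fin n × Fin N) ℝ)
    (hXD : XD = Matrix.blockDiagonal (fun j => X j))
    (hLMI : ∀ i : Fin N,
      (-(Matrix.fromBlocks (-XD) (Λ i * (A i * X i + B i * Y i))
          ((A i * X i + B i * Y i)ᵀ * (Λ i)ᵀ) (-(X i)))).PosDef) :
    ∀ i : Fin N,
      ((X i)⁻¹ -
        (A i + B i * (Y i * (X i)⁻¹))ᵀ * (∑ j, lam i j • (X j)⁻¹) *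
          (A i + B i * (Y i * (X i)⁻¹))).PosDef :=
  synthesis_lmi_general N n m lam hlam A B X Y hX Λ hΛ XD hXD hLMI
end
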